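/- arXiv:0802.3994 — 7 statements merged into one kernel-verified Lean document; each statement's English description precedes it below -/
import Mathlib

section
/- The Franel numbers a(n) = Σ_{k=0}^{n} C(n,k)^3 satisfy the recurrence (n+1)^2 a(n+1) = (7n^2+7n+2) a(n) + 8 n^2 a(n-1) for all n ≥ 1, with a(0)=1, a(1)=2. -/
/-!
Creative telescoping (Zeilberger). With `F n k = (n.choose k)^3`, the summand
`(n+2)² F (n+2) k - (7n²+21n+16) F (n+1) k - 8(n+1)² F n k` equals `G n (k+1) - G n k`
for an explicit certificate `G`, a rational function of `n, k` times `F (n+2) k`. Once every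
binomial coefficient is expressed through `(n+2).choose k`, this is an identity of rational
functions. Summing over `k ≤ n+2`, the right side telescopes to `G n (n+3) - G n 0 = 0`.
-/

open Finset

namespace Nat

variable {K : Type*} [Field K] [CharZero K]

theorem cast_choose_succ_right_eq_div (n k : ℕ) :
    (n.choose (k + 1) : K) = n.choose k * (n - k) / (k + 1) := by
  rw [eq_div_iff (Nat.cast_add_one_ne_zero k)]
  rcases le_or_gt k n with h | h
  · rw [← Nat.cast_sub h]
    exact_mod_cast choose_succ_right_eq n k
  · simp [choose_eq_zero_of_lt h, choose_eq_zero_of_lt (h.trans (lt_succ_self k))]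

theorem cast_choose_eq_succ_choose_mul_div (n k : ℕ) :
    (n.choose k : K) = (n + 1).choose k * (n + 1 - k) / (n + 1) := by
  rw [eq_div_iff (Nat.cast_add_one_ne_zero n)]
  rcases le_or_gt k (n + 1) with h | h
  · rw [← Nat.cast_one, ← Nat.cast_add, ← Nat.cast_sub h]
    exact_mod_cast choose_mul_succ_eq n k
  · simp [choose_eq_zero_of_lt h, choose_eq_zero_of_lt ((lt_succ_self n).trans h)]

end Nat

def franel (n : ℕ) : ℕ := ∑ k ∈ range (n + 1), n.choose k ^ 3

theorem cast_franel_eq_sum_range {n m : ℕ} (h : n < m) :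
    (franel n : ℚ) = ∑ k ∈ range m, (n.choose k : ℚ) ^ 3 := by
  rw [franel, Nat.cast_sum]
  refine sum_subset (range_subset_range.2 h) fun k _ hk => ?_
  simp [Nat.choose_eq_zero_of_lt (by simpa using hk : n < k)]

/-- Zeilberger's certificate; on integers it reads
`G n k = (n+1).choose (k-1) ^ 3 * (4 (k-1)³/(n+1) - 14n² + 27nk - 60n - 18k² + 66k - 68)`,
written here through `(n+2).choose k` so that `k = 0` needs no negative index. -/
def franelCert (n k : ℕ) : ℚ :=
  (k * (n + 2).choose k / (n + 2)) ^ 3 *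
    (4 * (k - 1) ^ 3 / (n + 1) + (-14 * n ^ 2 + 27 * n * k - 60 * n - 18 * k ^ 2 + 66 * k - 68))

theorem franel_summand_eq_cert_sub (n k : ℕ) :
    ((n : ℚ) + 2) ^ 2 * ((n + 2).choose k : ℚ) ^ 3
      - (7 * n ^ 2 + 21 * n + 16) * ((n + 1).choose k : ℚ) ^ 3
      - 8 * ((n : ℚ) + 1) ^ 2 * (n.choose k : ℚ) ^ 3
      = franelCert n (k + 1) - franelCert n k := by
  rw [Nat.cast_choose_eq_succ_choose_mul_div n, Nat.cast_choose_eq_succ_choose_mul_div (n + 1)]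
  simp only [franelCert, Nat.cast_choose_succ_right_eq_div (n + 2) k]
  push_cast
  field_simp
  ring

theorem franel_add_two (n : ℕ) :
    (n + 2) ^ 2 * franel (n + 2)
      = (7 * n ^ 2 + 21 * n + 16) * franel (n + 1) + 8 * (n + 1) ^ 2 * franel n := by
  have htel := sum_range_sub (franelCert n) (n + 3)
  have hend : franelCert n (n + 3) = 0 := by
    simp [franelCert, Nat.choose_succ_self]
  have hstart : franelCert n 0 = 0 := by simp [franelCert]
  rw [hend, hstart, sub_zero, ← sum_congr rfl fun k _ => franel_summand_eq_cert_sub n k,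
    sum_sub_distrib, sum_sub_distrib, ← mul_sum, ← mul_sum, ← mul_sum,
    ← cast_franel_eq_sum_range (by omega), ← cast_franel_eq_sum_range (by omega),
    ← cast_franel_eq_sum_range (by omega)] at htel
  qify
  linear_combination htel

/-- The Franel numbers `a n = ∑ k, (n.choose k)^3` satisfy the recurrence
`(n+1)² a(n+1) = (7n²+7n+2) a(n) + 8 n² a(n-1)` for all `n ≥ 1`,
with `a 0 = 1` and `a 1 = 2`. -/
theorem franel_recurrence (a : ℕ → ℕ)
    (ha : ∀ n, a n = ∑ k ∈ Finset.range (n + 1), (Nat.choose n k) ^ 3) :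
    a 0 = 1 ∧ a 1 = 2 ∧
      ∀ n, 1 ≤ n →
        (n + 1) ^ 2 * a (n + 1) = (7 * n ^ 2 + 7 * n + 2) * a n + 8 * n ^ 2 * a (n - 1) := by
  obtain rfl : a = franel := funext ha
  refine ⟨rfl, rfl, fun n hn => ?_⟩
  obtain ⟨m, rfl⟩ := Nat.exists_eq_add_of_le' hn
  rw [Nat.add_sub_cancel]
  linear_combination franel_add_two m
end

section
/- The Apéry numbers a(n) = Σ_{k=0}^{n} C(n,k)^2 C(n+k,n) satisfy the recurrence (n+1)^2 a(n+1) = (11n^2+11n+3) a(n) + n^2 a(n-1) for all n ≥ 1, with a(0)=1, a(1)=3. -/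
/-!
Creative telescoping. With `F n k = C(n,k)² C(n+k,n)`, Zeilberger's algorithm produces the
certificate `G n k = k³ P(n,k) C(n+2,k)² C(n+k,n)` with
`(n+1)²(n+2)² ((n+2)² F(n+2,k) - (11n²+33n+25) F(n+1,k) - (n+1)² F(n,k)) = G(n,k+1) - G(n,k)`
for every `k`. Each binomial coefficient occurring here is a rational multiple of `C(n+2,k)` or
of `C(n+k,n)`, by ratios valid for all `k`, so the identity reduces to one between rational
functions. Summing over `k ≤ n+2` telescopes to `G(n,n+3) - G(n,0) = 0`.
-/

open Finset

theorem add_succ_choose_succ_mul (m k : ℕ) :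
    (m + 1 + k).choose (m + 1) * (m + 1) = (m + k + 1) * (m + k).choose m := by
  rw [Nat.add_one_mul_choose_eq, Nat.add_right_comm]

theorem add_succ_choose_mul (m k : ℕ) :
    (m + (k + 1)).choose m * (k + 1) = (m + k + 1) * (m + k).choose m := by
  rw [mul_comm _ ((m + k).choose m), Nat.choose_mul_succ_eq, ← add_assoc]
  congr 1
  omega

section CastChoose

variable {R : Type*} [CommRing R]

theorem cast_choose_succ_right_mul (n k : ℕ) :
    (n.choose (k + 1) : R) * (k + 1) = n.choose k * (n - k) := by
  rcases le_or_gt k n with h | h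
  · have := congrArg (Nat.cast (R := R)) (Nat.choose_succ_right_eq n k)
    push_cast [Nat.cast_sub h] at this
    exact this
  · simp [Nat.choose_eq_zero_of_lt h, Nat.choose_eq_zero_of_lt (h.trans k.lt_succ_self)]

theorem cast_choose_mul_succ (n k : ℕ) :
    (n.choose k : R) * (n + 1) = (n + 1).choose k * (n + 1 - k) := by
  rcases le_or_gt k (n + 1) with h | h
  · have := congrArg (Nat.cast (R := R)) (Nat.choose_mul_succ_eq n k)
    push_cast [Nat.cast_sub h] at this
    exact this
  · simp [Nat.choose_eq_zero_of_lt h, Nat.choose_eq_zero_of_lt (n.lt_succ_self.trans h)]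

end CastChoose

def aperyTerm (n k : ℕ) : ℕ := n.choose k ^ 2 * (n + k).choose n

def aperyPoly (n k : ℚ) : ℚ :=
  -30 + 7 * k + k ^ 2 - 67 * n + 13 * n * k + n * k ^ 2 - 48 * n ^ 2 + 6 * n ^ 2 * k - 11 * n ^ 3

def aperyCert (n k : ℕ) : ℚ :=
  k ^ 3 * aperyPoly n k * (n + 2).choose k ^ 2 * (n + k).choose n

theorem aperyTerm_telescope (n k : ℕ) :
    ((n : ℚ) + 1) ^ 2 * ((n : ℚ) + 2) ^ 2 *
      (((n : ℚ) + 2) ^ 2 * aperyTerm (n + 2) k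
        - (11 * (n : ℚ) ^ 2 + 33 * n + 25) * aperyTerm (n + 1) k
        - ((n : ℚ) + 1) ^ 2 * aperyTerm n k) =
      aperyCert n (k + 1) - aperyCert n k := by
  have hn1 : (n : ℚ) + 1 ≠ 0 := by positivity
  have hn2 : (n : ℚ) + 2 ≠ 0 := by positivity
  have hk1 : (k : ℚ) + 1 ≠ 0 := by positivity
  have hC : (n.choose k : ℚ) = (n + 1).choose k * ((n : ℚ) + 1 - k) / (n + 1) := by
    rw [eq_div_iff hn1, cast_choose_mul_succ]
  have hB : ((n + 1).choose k : ℚ) = (n + 2).choose k * ((n : ℚ) + 2 - k) / (n + 2) := by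
    have := cast_choose_mul_succ (R := ℚ) (n + 1) k
    rw [show n + 1 + 1 = n + 2 from rfl] at this
    push_cast at this
    rw [eq_div_iff hn2]
    linear_combination this
  have hD : ((n + 2).choose (k + 1) : ℚ) = (n + 2).choose k * ((n : ℚ) + 2 - k) / (k + 1) := by
    have := cast_choose_succ_right_mul (R := ℚ) (n + 2) k
    push_cast at this
    rw [eq_div_iff hk1, this]
  have hv1 : ((n + 1 + k).choose (n + 1) : ℚ) =
      ((n : ℚ) + k + 1) * (n + k).choose n / (n + 1) := by
    rw [eq_div_iff hn1]; exact_mod_cast add_succ_choose_succ_mul n k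
  have hv2 : ((n + 2 + k).choose (n + 2) : ℚ) =
      ((n : ℚ) + k + 2) * (n + 1 + k).choose (n + 1) / (n + 2) := by
    have := add_succ_choose_succ_mul (n + 1) k
    rw [show n + 1 + 1 = n + 2 from rfl] at this
    qify at this
    rw [eq_div_iff hn2]
    linear_combination this
  have hw : ((n + (k + 1)).choose n : ℚ) = ((n : ℚ) + k + 1) * (n + k).choose n / (k + 1) := by
    rw [eq_div_iff hk1]; exact_mod_cast add_succ_choose_mul n k
  simp only [aperyTerm, aperyCert, aperyPoly]
  push_cast
  rw [hC, hB, hD, hw, hv2, hv1]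
  field_simp
  ring

def apery (n : ℕ) : ℕ := ∑ k ∈ range (n + 1), aperyTerm n k

theorem sum_range_aperyTerm {n m : ℕ} (h : n + 1 ≤ m) :
    ∑ k ∈ range m, aperyTerm n k = apery n := by
  refine (sum_subset (range_subset_range.mpr h) fun k _ hk => ?_).symm
  rw [mem_range, not_lt] at hk
  simp [aperyTerm, Nat.choose_eq_zero_of_lt (Nat.lt_of_succ_le hk)]

theorem apery_succ_succ (n : ℕ) :
    (n + 2) ^ 2 * apery (n + 2) =
      (11 * n ^ 2 + 33 * n + 25) * apery (n + 1) + (n + 1) ^ 2 * apery n := by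
  have hsum (j : ℕ) (hj : j ≤ n + 2) : ∑ k ∈ range (n + 3), (aperyTerm j k : ℚ) = apery j := by
    exact_mod_cast sum_range_aperyTerm (by omega : j + 1 ≤ n + 3)
  have hcert_zero : aperyCert n 0 = 0 := by simp [aperyCert]
  have hcert_top : aperyCert n (n + 3) = 0 := by simp [aperyCert]
  have htel := sum_range_sub (aperyCert n) (n + 3)
  simp only [← aperyTerm_telescope, ← mul_sum, sum_sub_distrib, hsum n (by omega),
    hsum (n + 1) (by omega), hsum (n + 2) le_rfl, hcert_zero, hcert_top] at htel
  have hne : ((n : ℚ) + 1) ^ 2 * ((n : ℚ) + 2) ^ 2 ≠ 0 := by positivity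
  qify
  apply mul_left_cancel₀ hne
  linear_combination htel

/-- The Apéry numbers `a n = ∑ k, (n.choose k)^2 * ((n+k).choose n)` satisfy the recurrence
`(n+1)² a(n+1) = (11n²+11n+3) a(n) + n² a(n-1)` for all `n ≥ 1`,
with `a 0 = 1` and `a 1 = 3`. -/
theorem apery_recurrence (a : ℕ → ℕ)
    (ha : ∀ n, a n = ∑ k ∈ Finset.range (n + 1),
      (Nat.choose n k) ^ 2 * Nat.choose (n + k) n) :
    a 0 = 1 ∧ a 1 = 3 ∧
      ∀ n, 1 ≤ n →
        (n + 1) ^ 2 * a (n + 1) = (11 * n ^ 2 + 11 * n + 3) * a n + n ^ 2 * a (n - 1) := by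
  obtain rfl : a = apery := funext ha
  refine ⟨rfl, rfl, fun n hn => ?_⟩
  obtain ⟨m, rfl⟩ := Nat.exists_eq_add_of_le' hn
  have h := apery_succ_succ m
  rw [Nat.add_sub_cancel]
  linear_combination h
end

section
/- The sequence a(n) = Σ_{k=0}^{n} C(n,k)^2 C(2k,k) satisfies the recurrence (n+1)^2 a(n+1) = (10n^2+10n+3) a(n) − 9 n^2 a(n-1) for all n ≥ 1, with a(0)=1, a(1)=3. -/
/-!
Creative telescoping. Writing `t n k = C(n,k)² C(2k,k)` for the summand, Zeilberger's algorithm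
yields the certificate `G n (k+1) = 2(2k+1)(3k-4n-1) t n k`, `G n 0 = 0`, with
`(n+1)² t (n+1) k - (10n²+10n+3) t n k + 9n² t (n-1) k = G n (k+1) - G n k`.
Dividing by `t n k`, this is an identity of rational functions in `n` and `k`, because each
neighbouring binomial coefficient is a rational multiple of `C(n,k)` and `C(2k,k)`.
Summing over `k` telescopes to `G n (n+2) - G n 0 = 0`.
-/

open Finset Nat

section ChooseRatios

variable {K : Type*} [Field K] [CharZero K]

theorem cast_choose_succ_succ (n k : ℕ) :
    ((n + 1).choose (k + 1) : K) = (n + 1) / (k + 1) * n.choose k := by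
  rw [div_mul_eq_mul_div, eq_div_iff k.cast_add_one_ne_zero]
  exact_mod_cast (add_one_mul_choose_eq n k).symm

theorem cast_choose_succ_right (n k : ℕ) :
    (n.choose (k + 1) : K) = (n - k) / (k + 1) * n.choose k := by
  rw [div_mul_eq_mul_div, eq_div_iff k.cast_add_one_ne_zero]
  rcases le_or_gt k n with hkn | hnk
  · have := congrArg (Nat.cast : ℕ → K) (choose_succ_right_eq n k)
    push_cast [Nat.cast_sub hkn] at this
    rw [this, mul_comm]
  · simp [choose_eq_zero_of_lt hnk, choose_eq_zero_of_lt (hnk.trans k.lt_succ_self)]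

theorem cast_choose_eq_mul_choose_succ (n k : ℕ) :
    (n.choose k : K) = (n + 1 - k) / (n + 1) * (n + 1).choose k := by
  rw [div_mul_eq_mul_div, eq_div_iff n.cast_add_one_ne_zero]
  rcases le_or_gt k (n + 1) with hkn | hnk
  · have := congrArg (Nat.cast : ℕ → K) (choose_mul_succ_eq n k)
    push_cast [Nat.cast_sub hkn] at this
    rw [this, mul_comm]
  · simp [choose_eq_zero_of_lt hnk, choose_eq_zero_of_lt (n.lt_succ_self.trans hnk)]

theorem cast_centralBinom_succ (k : ℕ) :
    (centralBinom (k + 1) : K) = 2 * (2 * k + 1) / (k + 1) * centralBinom k := by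
  rw [div_mul_eq_mul_div, eq_div_iff k.cast_add_one_ne_zero, mul_comm]
  exact_mod_cast succ_mul_centralBinom_succ k

end ChooseRatios

def zagierTerm (n k : ℕ) : ℤ := (n.choose k : ℤ) ^ 2 * centralBinom k

def zagierC (n : ℕ) : ℤ := ∑ k ∈ range (n + 1), zagierTerm n k

def zagierCert (n : ℕ) : ℕ → ℤ
  | 0 => 0
  | k + 1 => 2 * (2 * k + 1) * (3 * k - 4 * n - 1) * zagierTerm n k

theorem zagierTerm_recurrence (n k : ℕ) :
    ((n : ℤ) + 2) ^ 2 * zagierTerm (n + 2) k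
        - (10 * ((n : ℤ) + 1) ^ 2 + 10 * ((n : ℤ) + 1) + 3) * zagierTerm (n + 1) k
        + 9 * ((n : ℤ) + 1) ^ 2 * zagierTerm n k
      = zagierCert (n + 1) (k + 1) - zagierCert (n + 1) k := by
  cases k with
  | zero => simp [zagierTerm, zagierCert]; ring
  | succ k =>
    apply Int.cast_injective (α := ℚ)
    simp only [zagierTerm, zagierCert]
    push_cast
    rw [cast_choose_succ_succ (n + 1), cast_choose_succ_right (n + 1), cast_choose_succ_right n,
      cast_choose_eq_mul_choose_succ n k, cast_centralBinom_succ]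
    push_cast
    field_simp
    ring

theorem sum_range_zagierTerm {n N : ℕ} (h : n < N) :
    ∑ k ∈ range N, zagierTerm n k = zagierC n := by
  obtain ⟨d, rfl⟩ := Nat.exists_eq_add_of_le h
  rw [zagierC, sum_range_add, add_eq_left]
  exact sum_eq_zero fun i _ ↦ by simp [zagierTerm, choose_eq_zero_of_lt (by omega : n < n + 1 + i)]

theorem zagierC_recurrence (n : ℕ) :
    ((n : ℤ) + 2) ^ 2 * zagierC (n + 2)
      = (10 * ((n : ℤ) + 1) ^ 2 + 10 * ((n : ℤ) + 1) + 3) * zagierC (n + 1)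
        - 9 * ((n : ℤ) + 1) ^ 2 * zagierC n := by
  have htelescope := sum_range_sub (zagierCert (n + 1)) (n + 3)
  simp_rw [← zagierTerm_recurrence, sum_add_distrib, sum_sub_distrib, ← mul_sum] at htelescope
  rw [sum_range_zagierTerm (by omega), sum_range_zagierTerm (by omega),
    sum_range_zagierTerm (by omega)] at htelescope
  have hboundary : zagierCert (n + 1) (n + 3) = zagierCert (n + 1) 0 := by
    simp [zagierCert, zagierTerm]
  linear_combination htelescope + hboundary

/-- The sequence `a n = ∑ k, (n.choose k)^2 * ((2k).choose k)` satisfies the recurrence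
`(n+1)² a(n+1) = (10n²+10n+3) a(n) − 9 n² a(n-1)` for all `n ≥ 1`,
with `a 0 = 1` and `a 1 = 3`. -/
theorem zagier_c_recurrence (a : ℕ → ℤ)
    (ha : ∀ n, a n = ∑ k ∈ Finset.range (n + 1),
      ((Nat.choose n k : ℤ)) ^ 2 * (Nat.choose (2 * k) k : ℤ)) :
    a 0 = 1 ∧ a 1 = 3 ∧
      ∀ n : ℕ, 1 ≤ n →
        ((n : ℤ) + 1) ^ 2 * a (n + 1)
          = (10 * (n : ℤ) ^ 2 + 10 * n + 3) * a n - 9 * (n : ℤ) ^ 2 * a (n - 1) := by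
  obtain rfl : a = zagierC := funext ha
  refine ⟨rfl, rfl, fun n hn ↦ ?_⟩
  obtain ⟨m, rfl⟩ := Nat.exists_eq_add_of_le' hn
  rw [Nat.add_sub_cancel]
  push_cast
  linear_combination zagierC_recurrence m
end

section
/- The sequence a(n) = Σ_{k} (−1)^k 3^{n−3k} C(n,3k) (3k)!/(k!)^3 satisfies the recurrence (n+1)^2 a(n+1) = (9n^2+9n+3) a(n) − 27 n^2 a(n-1) for all n ≥ 1, with a(0)=1, a(1)=3. -/
/-- The summand. -/
def zfz (n k : ℕ) : ℤ :=
  (-1) ^ k * 3 ^ (n - 3 * k) * (Nat.choose n (3 * k) : ℤ)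
    * (Nat.choose (3 * k) k : ℤ) * (Nat.choose (2 * k) k : ℤ)

/-- The WZ certificate (value at `k = j + 1`). -/
def zgz (n j : ℕ) : ℤ :=
  27 * (-1) ^ j * 3 ^ (n + 1 - (3 * j + 3)) * (Nat.choose n (3 * j + 2) : ℤ)
    * ((j : ℤ) + 1) ^ 2 * (Nat.choose (3 * j + 2) j : ℤ) * (Nat.choose (2 * j + 2) (j + 1) : ℤ)

def zGz (n : ℕ) : ℕ → ℤ
  | 0 => 0
  | (k + 1) => zgz n k

lemma zfact_div (k : ℕ) :
    (3 * k).factorial / (k.factorial) ^ 3 = Nat.choose (3 * k) k * Nat.choose (2 * k) k := by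
  apply Nat.div_eq_of_eq_mul_left (by positivity)
  have h1 := Nat.choose_mul_factorial_mul_factorial (show k ≤ 3 * k by omega)
  have h2 := Nat.choose_mul_factorial_mul_factorial (show k ≤ 2 * k by omega)
  rw [show 3 * k - k = 2 * k by omega] at h1
  rw [show 2 * k - k = k by omega] at h2
  calc (3 * k).factorial = (3 * k).choose k * k.factorial * (2 * k).factorial := h1.symm
    _ = (3 * k).choose k * k.factorial * ((2 * k).choose k * k.factorial * k.factorial) := by
        rw [h2]
    _ = (3 * k).choose k * (2 * k).choose k * k.factorial ^ 3 := by ring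

set_option maxHeartbeats 2000000 in
lemma zkey (m k : ℕ) :
    ((m : ℤ) + 2) ^ 2 * zfz (m + 2) k
      - (9 * ((m : ℤ) + 1) ^ 2 + 9 * ((m : ℤ) + 1) + 3) * zfz (m + 1) k
      + 27 * ((m : ℤ) + 1) ^ 2 * zfz m k
    = zGz (m + 1) (k + 1) - zGz (m + 1) k := by
  match k with
  | 0 =>
    match m with
    | 0 => decide
    | (s+1) =>
      show _ = zgz (s + 2) 0 - 0
      simp only [zfz, zgz, zGz]
      norm_num
      have hC : ((s + 2).choose 2 : ℚ) = (s + 2) * (s + 1) / 2 := by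
        rw [eq_div_iff (by norm_num)]
        have h := Nat.choose_succ_right_eq (s + 2) 1
        rw [Nat.choose_one_right] at h
        rw [show ((2:ℚ)) = ((2:ℕ):ℚ) from by norm_num]
        rw [show (s + 2 - 1) = s + 1 from by omega] at h
        exact_mod_cast h
      qify
      rw [hC]
      push_cast
      ring
  | (j+1) =>
    obtain h | h | h | h | h : m < 3 * j + 1 ∨ m = 3 * j + 1 ∨ m = 3 * j + 2 ∨ m = 3 * j + 3 ∨
        3 * j + 4 ≤ m := by omega
    · -- all terms vanish
      simp only [zfz, zGz, zgz]
      rw [Nat.choose_eq_zero_of_lt (show m + 2 < 3 * (j + 1) by omega),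
        Nat.choose_eq_zero_of_lt (show m + 1 < 3 * (j + 1) by omega),
        Nat.choose_eq_zero_of_lt (show m < 3 * (j + 1) by omega),
        Nat.choose_eq_zero_of_lt (show m + 1 < 3 * (j + 1) + 2 by omega),
        Nat.choose_eq_zero_of_lt (show m + 1 < 3 * j + 2 by omega)]
      push_cast
      ring
    · -- 3k = m+2
      subst h
      simp only [zfz, zGz, zgz]
      rw [Nat.choose_eq_zero_of_lt (show 3*j+1+1 < 3*(j+1) by omega),
        Nat.choose_eq_zero_of_lt (show 3*j+1 < 3*(j+1) by omega),
        Nat.choose_eq_zero_of_lt (show 3*j+1+1 < 3*(j+1)+2 by omega),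
        show 3*j+1+2 - 3*(j+1) = 0 from by omega,
        show 3*j+1+1+1 - (3*j+3) = 0 from by omega,
        Nat.choose_self,
        show (3:ℕ)*j+1+1 = 3*j+2 from by omega]
      rw [show (3:ℕ)*j+1+2 = 3*(j+1) from by omega, Nat.choose_self,
        show (2:ℕ)*j+2 = 2*(j+1) from by omega]
      have hw' := Nat.add_one_mul_choose_eq (3*j+2) j
      rw [show 3*j+2+1 = 3*(j+1) from by omega] at hw'
      qify at hw'
      have d5 : (3*(j:ℚ)+3) ≠ 0 := by positivity
      have hw : (((3*j+2).choose j : ℕ) : ℚ)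
          = (((3*(j+1)).choose (j+1) : ℕ) : ℚ) * ((j:ℚ)+1) / (3*(j:ℚ)+3) := by
        rw [eq_div_iff d5]; linear_combination hw'
      qify
      rw [hw]
      field_simp
      ring
    · -- 3k = m+1
      subst h
      simp only [zfz, zGz, zgz]
      rw [Nat.choose_eq_zero_of_lt (show 3*j+2 < 3*(j+1) by omega),
        Nat.choose_eq_zero_of_lt (show 3*j+2+1 < 3*(j+1)+2 by omega),
        show 3*j+2+2 - 3*(j+1) = 1 from by omega,
        show 3*j+2+1+1 - (3*j+3) = 1 from by omega,
        show (2:ℕ)*j+2 = 2*(j+1) from by omega,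
        show (3:ℕ)*j+2+2 = 3*(j+1)+1 from by omega,
        show (3:ℕ)*j+2+1 = 3*(j+1) from by omega,
        Nat.choose_self]
      have ha2' := Nat.choose_mul_succ_eq (3*(j+1)) (3*(j+1))
      rw [Nat.choose_self, show 3*(j+1)+1 - 3*(j+1) = 1 from by omega] at ha2'
      qify at ha2'
      have hz' := Nat.choose_succ_right_eq (3*(j+1)) (3*j+2)
      rw [show 3*j+2+1 = 3*(j+1) from by omega, Nat.choose_self,
        show 3*(j+1) - (3*j+2) = 1 from by omega] at hz'
      qify at hz'
      have hw' := Nat.add_one_mul_choose_eq (3*j+2) j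
      rw [show 3*j+2+1 = 3*(j+1) from by omega] at hw'
      qify at hw'
      have d5 : (3*(j:ℚ)+3) ≠ 0 := by positivity
      have ha2 : (((3*(j+1)+1).choose (3*(j+1)) : ℕ) : ℚ) = 3*(j:ℚ)+4 := by
        linear_combination -ha2'
      have hz : (((3*(j+1)).choose (3*j+2) : ℕ) : ℚ) = 3*(j:ℚ)+3 := by
        linear_combination -hz'
      have hw : (((3*j+2).choose j : ℕ) : ℚ)
          = (((3*(j+1)).choose (j+1) : ℕ) : ℚ) * ((j:ℚ)+1) / (3*(j:ℚ)+3) := by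
        rw [eq_div_iff d5]; linear_combination hw'
      qify
      rw [ha2, hz, hw]
      field_simp
      rw [Nat.sub_self, pow_zero]
      ring
    · -- 3k = m (r = 0)
      subst h
      simp only [zfz, zGz, zgz]
      rw [Nat.choose_eq_zero_of_lt (show 3*j+3+1 < 3*(j+1)+2 by omega),
        show 3*j+3 - 3*(j+1) = 0 from by omega,
        show 3*j+3+1 - 3*(j+1) = 1 from by omega,
        show 3*j+3+2 - 3*(j+1) = 2 from by omega,
        show 3*j+3+1+1 - (3*j+3) = 2 from by omega,
        show (2:ℕ)*j+2 = 2*(j+1) from by omega,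
        show (3:ℕ)*j+3+2 = 3*(j+1)+2 from by omega,
        show (3:ℕ)*j+3+1 = 3*(j+1)+1 from by omega,
        show (3:ℕ)*j+3 = 3*(j+1) from by omega,
        Nat.choose_self]
      have ha1' := Nat.choose_mul_succ_eq (3*(j+1)) (3*(j+1))
      rw [Nat.choose_self, show 3*(j+1)+1 - 3*(j+1) = 1 from by omega] at ha1'
      qify at ha1'
      have ha2' := Nat.choose_mul_succ_eq (3*(j+1)+1) (3*(j+1))
      rw [show 3*(j+1)+1+1 - 3*(j+1) = 2 from by omega,
        show 3*(j+1)+1+1 = 3*(j+1)+2 from by omega] at ha2'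
      qify at ha2'
      have hz' := Nat.choose_succ_right_eq (3*(j+1)+1) (3*j+2)
      rw [show 3*j+2+1 = 3*(j+1) from by omega,
        show 3*(j+1)+1 - (3*j+2) = 2 from by omega] at hz'
      qify at hz'
      have hw' := Nat.add_one_mul_choose_eq (3*j+2) j
      rw [show 3*j+2+1 = 3*(j+1) from by omega] at hw'
      qify at hw'
      have d5 : (3*(j:ℚ)+3) ≠ 0 := by positivity
      have dtwo : (2:ℚ) ≠ 0 := by norm_num
      have ha1 : (((3*(j+1)+1).choose (3*(j+1)) : ℕ) : ℚ) = 3*(j:ℚ)+4 := by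
        linear_combination -ha1'
      have ha2 : (((3*(j+1)+2).choose (3*(j+1)) : ℕ) : ℚ)
          = (((3*(j+1)+1).choose (3*(j+1)) : ℕ) : ℚ) * (3*(j:ℚ)+5) / 2 := by
        rw [eq_div_iff dtwo]; linear_combination -ha2'
      have hz : (((3*(j+1)+1).choose (3*j+2) : ℕ) : ℚ)
          = (((3*(j+1)+1).choose (3*(j+1)) : ℕ) : ℚ) * (3*(j:ℚ)+3) / 2 := by
        rw [eq_div_iff dtwo]; linear_combination -hz'
      have hw : (((3*j+2).choose j : ℕ) : ℚ)
          = (((3*(j+1)).choose (j+1) : ℕ) : ℚ) * ((j:ℚ)+1) / (3*(j:ℚ)+3) := by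
        rw [eq_div_iff d5]; linear_combination hw'
      qify
      rw [ha2, hz, ha1, hw]
      field_simp
      ring
    · -- generic
      obtain ⟨s, rfl⟩ : ∃ s, m = 3*j+4+s := ⟨m - (3*j+4), by omega⟩
      simp only [zfz, zGz, zgz]
      rw [show 3*j+4+s - 3*(j+1) = s+1 from by omega,
          show 3*j+4+s+1 - 3*(j+1) = s+2 from by omega,
          show 3*j+4+s+2 - 3*(j+1) = s+3 from by omega,
          show 3*j+4+s+1+1 - (3*(j+1)+3) = s from by omega,
          show 3*j+4+s+1+1 - (3*j+3) = s+3 from by omega,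
          show (2:ℕ)*j+2 = 2*(j+1) from by omega]
      have ha1' := Nat.choose_mul_succ_eq (3*j+4+s) (3*(j+1))
      rw [show 3*j+4+s+1 - 3*(j+1) = s+2 from by omega] at ha1'
      qify at ha1'
      have ha2' := Nat.choose_mul_succ_eq (3*j+4+s+1) (3*(j+1))
      rw [show 3*j+4+s+1+1 - 3*(j+1) = s+3 from by omega,
          show 3*j+4+s+1+1 = 3*j+4+s+2 from by omega] at ha2'
      qify at ha2'
      have hy' := Nat.choose_succ_right_eq (3*j+4+s+1) (3*(j+1))
      rw [show 3*j+4+s+1 - 3*(j+1) = s+2 from by omega] at hy'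
      qify at hy'
      have hb' := Nat.choose_succ_right_eq (3*j+4+s+1) (3*(j+1)+1)
      rw [show 3*j+4+s+1 - (3*(j+1)+1) = s+1 from by omega,
          show 3*(j+1)+1+1 = 3*(j+1)+2 from by omega] at hb'
      qify at hb'
      have hz' := Nat.choose_succ_right_eq (3*j+4+s+1) (3*j+2)
      rw [show 3*j+4+s+1 - (3*j+2) = s+3 from by omega,
          show 3*j+2+1 = 3*(j+1) from by omega] at hz'
      qify at hz'
      have hw' := Nat.add_one_mul_choose_eq (3*j+2) j
      rw [show 3*j+2+1 = 3*(j+1) from by omega] at hw'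
      qify at hw'
      have ht' := Nat.choose_mul_succ_eq (3*(j+1)) (j+1)
      rw [show 3*(j+1)+1 - (j+1) = 2*j+3 from by omega] at ht'
      qify at ht'
      have hB1' := Nat.choose_mul_succ_eq (3*(j+1)+1) (j+1)
      rw [show 3*(j+1)+1+1 - (j+1) = 2*j+4 from by omega,
          show 3*(j+1)+1+1 = 3*(j+1)+2 from by omega] at hB1'
      qify at hB1'
      have hu' := Nat.add_one_mul_choose_eq (2*(j+1)) (j+1)
      qify at hu'
      have hB2' := Nat.choose_mul_succ_eq (2*(j+1)+1) (j+1+1)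
      rw [show 2*(j+1)+1+1 - (j+1+1) = j+2 from by omega,
          show 2*(j+1)+1+1 = 2*(j+1)+2 from by omega] at hB2'
      qify at hB2'
      have d1 : ((s:ℚ)+2) ≠ 0 := by positivity
      have d2 : ((s:ℚ)+3) ≠ 0 := by positivity
      have d3 : (3*(j:ℚ)+4) ≠ 0 := by positivity
      have d4 : (3*(j:ℚ)+5) ≠ 0 := by positivity
      have d5 : (3*(j:ℚ)+3) ≠ 0 := by positivity
      have d6 : (2*(j:ℚ)+3) ≠ 0 := by positivity
      have d7 : (2*(j:ℚ)+4) ≠ 0 := by positivity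
      have d8 : ((j:ℚ)+2) ≠ 0 := by positivity
      have hb : (((3*j+4+s+1).choose (3*(j+1)+2) : ℕ) : ℚ)
          = (((3*j+4+s+1).choose (3*(j+1)+1) : ℕ) : ℚ) * (s+1) / (3*(j:ℚ)+5) := by
        rw [eq_div_iff d4]; push_cast at hb' ⊢; linear_combination hb'
      have hy : (((3*j+4+s+1).choose (3*(j+1)+1) : ℕ) : ℚ)
          = (((3*j+4+s+1).choose (3*(j+1)) : ℕ) : ℚ) * (s+2) / (3*(j:ℚ)+4) := by
        rw [eq_div_iff d3]; push_cast at hy' ⊢; linear_combination hy'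
      have ha2 : (((3*j+4+s+2).choose (3*(j+1)) : ℕ) : ℚ)
          = (((3*j+4+s+1).choose (3*(j+1)) : ℕ) : ℚ) * (3*(j:ℚ)+s+6) / ((s:ℚ)+3) := by
        rw [eq_div_iff d2]; push_cast at ha2' ⊢; linear_combination -ha2'
      have hz : (((3*j+4+s+1).choose (3*j+2) : ℕ) : ℚ)
          = (((3*j+4+s+1).choose (3*(j+1)) : ℕ) : ℚ) * (3*(j:ℚ)+3) / ((s:ℚ)+3) := by
        rw [eq_div_iff d2]; push_cast at hz' ⊢; linear_combination -hz'
      have ha1 : (((3*j+4+s+1).choose (3*(j+1)) : ℕ) : ℚ)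
          = (((3*j+4+s).choose (3*(j+1)) : ℕ) : ℚ) * (3*(j:ℚ)+s+5) / ((s:ℚ)+2) := by
        rw [eq_div_iff d1]; push_cast at ha1' ⊢; linear_combination -ha1'
      have hB1 : (((3*(j+1)+2).choose (j+1) : ℕ) : ℚ)
          = (((3*(j+1)+1).choose (j+1) : ℕ) : ℚ) * (3*(j:ℚ)+5) / (2*(j:ℚ)+4) := by
        rw [eq_div_iff d7]; push_cast at hB1' ⊢; linear_combination -hB1'
      have ht : (((3*(j+1)+1).choose (j+1) : ℕ) : ℚ)
          = (((3*(j+1)).choose (j+1) : ℕ) : ℚ) * (3*(j:ℚ)+4) / (2*(j:ℚ)+3) := by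
        rw [eq_div_iff d6]; push_cast at ht' ⊢; linear_combination -ht'
      have hB2 : (((2*(j+1)+2).choose (j+1+1) : ℕ) : ℚ)
          = (((2*(j+1)+1).choose (j+1+1) : ℕ) : ℚ) * (2*(j:ℚ)+4) / ((j:ℚ)+2) := by
        rw [eq_div_iff d8]; push_cast at hB2' ⊢; linear_combination -hB2'
      have hu : (((2*(j+1)+1).choose (j+1+1) : ℕ) : ℚ)
          = (((2*(j+1)).choose (j+1) : ℕ) : ℚ) * (2*(j:ℚ)+3) / ((j:ℚ)+2) := by
        rw [eq_div_iff d8]; push_cast at hu' ⊢; linear_combination -hu'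
      have hw : (((3*j+2).choose j : ℕ) : ℚ)
          = (((3*(j+1)).choose (j+1) : ℕ) : ℚ) * ((j:ℚ)+1) / (3*(j:ℚ)+3) := by
        rw [eq_div_iff d5]; push_cast at hw' ⊢; linear_combination hw'
      qify
      rw [hb, hy, ha2, hz, ha1, hB1, ht, hB2, hu, hw]
      field_simp
      ring

/-- The sequence `a n = ∑_{0 ≤ 3k ≤ n} (−1)^k 3^(n−3k) C(n,3k) (3k)!/(k!)³` satisfies the
recurrence `(n+1)² a(n+1) = (9n²+9n+3) a(n) − 27 n² a(n-1)` for all `n ≥ 1`,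
with `a 0 = 1` and `a 1 = 3`. -/
theorem zagier_f_recurrence (a : ℕ → ℤ)
    (ha : ∀ n, a n = ∑ k ∈ Finset.range (n / 3 + 1),
      (-1 : ℤ) ^ k * 3 ^ (n - 3 * k) * (Nat.choose n (3 * k) : ℤ)
        * (((3 * k).factorial / (k.factorial) ^ 3 : ℕ) : ℤ)) :
    a 0 = 1 ∧ a 1 = 3 ∧
      ∀ n : ℕ, 1 ≤ n →
        ((n : ℤ) + 1) ^ 2 * a (n + 1)
          = (9 * (n : ℤ) ^ 2 + 9 * n + 3) * a n - 27 * (n : ℤ) ^ 2 * a (n - 1) := by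
  have ha' : ∀ N n : ℕ, n + 1 ≤ N → a n = ∑ k ∈ Finset.range N, zfz n k := by
    intro N n hN
    rw [ha n]
    have h1 : ∀ k ∈ Finset.range (n / 3 + 1),
        (-1 : ℤ) ^ k * 3 ^ (n - 3 * k) * (Nat.choose n (3 * k) : ℤ)
          * (((3 * k).factorial / (k.factorial) ^ 3 : ℕ) : ℤ) = zfz n k := by
      intro k _
      rw [zfact_div k, zfz]
      push_cast
      ring
    rw [Finset.sum_congr rfl h1]
    apply Finset.sum_subset
    · intro x hx
      simp only [Finset.mem_range] at *
      omega
    · intro x _ hx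
      simp only [Finset.mem_range] at hx
      have h3 : n < 3 * x := by omega
      simp [zfz, Nat.choose_eq_zero_of_lt h3]
  refine ⟨?_, ?_, ?_⟩
  · rw [ha' 1 0 (by norm_num)]
    simp [zfz]
  · rw [ha' 2 1 (by norm_num)]
    simp [Finset.sum_range_succ, zfz]
    decide
  · intro n hn
    obtain ⟨m, rfl⟩ : ∃ m, n = m + 1 := ⟨n - 1, by omega⟩
    have h2 := ha' (m + 3) (m + 2) (by omega)
    have h1 := ha' (m + 3) (m + 1) (by omega)
    have h0 := ha' (m + 3) m (by omega)
    have tele : ∑ k ∈ Finset.range (m + 3),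
        (((m : ℤ) + 2) ^ 2 * zfz (m + 2) k
          - (9 * ((m : ℤ) + 1) ^ 2 + 9 * ((m : ℤ) + 1) + 3) * zfz (m + 1) k
          + 27 * ((m : ℤ) + 1) ^ 2 * zfz m k) = 0 := by
      rw [Finset.sum_congr rfl (fun k _ => zkey m k), Finset.sum_range_sub (zGz (m + 1))]
      have : zGz (m + 1) (m + 3) = 0 := by
        show zgz (m + 1) (m + 2) = 0
        simp [zgz, Nat.choose_eq_zero_of_lt (show m + 1 < 3 * (m + 2) + 2 by omega)]
      rw [this]
      simp [zGz]
    simp only [Finset.sum_add_distrib, Finset.sum_sub_distrib, ← Finset.mul_sum] at tele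
    rw [show m + 1 + 1 = m + 2 from rfl, show m + 1 - 1 = m from rfl, h2, h1, h0]
    push_cast
    linarith [tele]
end

section
/- Let p be an odd prime. The sequence c(n) = C(2n,n)^2 satisfies the Dwork congruences for p: with C(n) := c(n)/c(⌊n/p⌋) ∈ ℤ_p, one has C(n) ≡ C(n + m p^s) (mod p^s) for all n, s ∈ ℕ and all m ∈ {0,1,…,p−1}, and c(0)=1. -/
open Finset Nat

def Pf (p n : ℕ) : ℕ := ∏ j ∈ Finset.range n, if p ∣ (j + 1) then 1 else (j + 1)

def eps (p n : ℕ) : ℕ := 2 * (n % p) / p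

lemma Pf_pos (p n : ℕ) : 0 < Pf p n :=
  Finset.prod_pos fun j _ => by split <;> omega

lemma not_dvd_Pf (p : ℕ) (hp : p.Prime) (n : ℕ) : ¬ p ∣ Pf p n := by
  induction n with
  | zero => simpa [Pf] using hp.one_lt.ne'
  | succ n ih =>
    rw [Pf, prod_range_succ, ← Pf, hp.dvd_mul]
    rintro (h | h)
    · exact ih h
    · split at h
      · exact (Nat.Prime.one_lt hp).ne' (Nat.dvd_one.mp h)
      · next hdvd => exact hdvd h

lemma factorial_eq (p : ℕ) (hp : p.Prime) (n : ℕ) :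
    n ! = p ^ (n / p) * (n / p)! * Pf p n := by
  induction n with
  | zero => simp [Pf]
  | succ n ih =>
    rw [Pf, prod_range_succ, ← Pf]
    by_cases h : p ∣ (n + 1)
    · obtain ⟨k, hk⟩ := h
      have hk1 : 1 ≤ k := by nlinarith [hp.two_le]
      obtain ⟨k, rfl⟩ : ∃ k', k = k' + 1 := ⟨k - 1, by omega⟩
      have h1 : (n + 1) / p = k + 1 := by
        rw [hk]; exact Nat.mul_div_cancel_left _ hp.pos
      have h2 : n / p = k := by
        have h2le := hp.two_le
        have hmul : p * (k + 1) = p * k + p := by ring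
        have hn : n = p * k + (p - 1) := by omega
        rw [hn, Nat.mul_add_div hp.pos]
        have h0 : (p - 1) / p = 0 := Nat.div_eq_of_lt (by omega)
        omega
      rw [Nat.factorial_succ, ih, h1, h2, if_pos ⟨k + 1, hk⟩, hk, Nat.factorial_succ]
      ring
    · have h1 : (n + 1) / p = n / p := Nat.succ_div_of_not_dvd h
      rw [Nat.factorial_succ, ih, h1, if_neg h]
      ring

lemma two_mul_div (p : ℕ) (hp : 0 < p) (n : ℕ) :
    2 * n / p = 2 * (n / p) + eps p n := by
  unfold eps
  conv_lhs => rw [← Nat.div_add_mod n p]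
  rw [mul_add, ← mul_assoc, mul_comm 2 p, mul_assoc, Nat.mul_add_div hp]

lemma eps_le_one (p : ℕ) (hp : 0 < p) (n : ℕ) : eps p n ≤ 1 := by
  unfold eps
  have h := Nat.mod_lt n hp
  have h2 : 2 * (n % p) / p < 2 := (Nat.div_lt_iff_lt_mul hp).2 (by omega)
  omega

lemma block_const (p s : ℕ) (hp : p.Prime) (hs : 1 ≤ s) [NeZero (p ^ s)] (n : ℕ) :
    ((∏ j ∈ Finset.range (p ^ s), if p ∣ (n + j + 1) then 1 else (n + j + 1) : ℕ)
        : ZMod (p ^ s))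
      = ∏ x : ZMod (p ^ s), if p ∣ x.val then 1 else x := by
  have hdvd : p ∣ p ^ s := dvd_pow_self p (by omega)
  rw [Nat.cast_prod]
  refine Finset.prod_bij' (fun j _ => ((n + j + 1 : ℕ) : ZMod (p ^ s)))
    (fun x _ => (x - ((n + 1 : ℕ) : ZMod (p ^ s))).val) (fun j hj => Finset.mem_univ _)
    (fun x _ => Finset.mem_range.2 (ZMod.val_lt _)) ?_ ?_ ?_
  · intro j hj
    have hj' := Finset.mem_range.1 hj
    have h : (((n + j + 1 : ℕ) : ZMod (p ^ s)) - ((n + 1 : ℕ) : ZMod (p ^ s)))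
        = ((j : ℕ) : ZMod (p ^ s)) := by push_cast; ring
    show (((n + j + 1 : ℕ) : ZMod (p ^ s)) - ((n + 1 : ℕ) : ZMod (p ^ s))).val = j
    rw [h, ZMod.val_natCast, Nat.mod_eq_of_lt hj']
  · intro x _
    show ((n + (x - ((n + 1 : ℕ) : ZMod (p ^ s))).val + 1 : ℕ) : ZMod (p ^ s)) = x
    push_cast [ZMod.natCast_val, ZMod.cast_id]
    ring
  · intro j hj
    have key : p ∣ (n + j + 1) ↔ p ∣ ((n + j + 1 : ℕ) : ZMod (p ^ s)).val := by
      rw [ZMod.val_natCast, Nat.dvd_mod_iff hdvd]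
    show ((if p ∣ (n + j + 1) then 1 else (n + j + 1) : ℕ) : ZMod (p ^ s))
        = if p ∣ ((n + j + 1 : ℕ) : ZMod (p ^ s)).val then 1
          else ((n + j + 1 : ℕ) : ZMod (p ^ s))
    by_cases h : p ∣ n + j + 1
    · rw [if_pos h, if_pos (key.1 h), Nat.cast_one]
    · rw [if_neg h, if_neg (fun hx => h (key.2 hx))]

lemma Pf_add_block (p s : ℕ) (hp : p.Prime) (hs : 1 ≤ s) [NeZero (p ^ s)] (n : ℕ) :
    ((Pf p (n + p ^ s) : ℕ) : ZMod (p ^ s))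
      = (∏ x : ZMod (p ^ s), if p ∣ x.val then 1 else x) * (Pf p n : ZMod (p ^ s)) := by
  rw [Pf, Finset.prod_range_add, ← Pf, Nat.cast_mul, block_const p s hp hs n, mul_comm]

lemma Pf_add_mul (p s : ℕ) (hp : p.Prime) (hs : 1 ≤ s) [NeZero (p ^ s)] (k n : ℕ) :
    ((Pf p (n + k * p ^ s) : ℕ) : ZMod (p ^ s))
      = (∏ x : ZMod (p ^ s), if p ∣ x.val then 1 else x) ^ k * (Pf p n : ZMod (p ^ s)) := by
  induction k with
  | zero => simp
  | succ k ih =>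
    have h : n + (k + 1) * p ^ s = (n + k * p ^ s) + p ^ s := by ring
    rw [h, Pf_add_block p s hp hs, ih]
    ring

lemma ID (p : ℕ) (hp : p.Prime) (n : ℕ) :
    ((2 * n)!) ^ 2 * Pf p n ^ 4 * ((n / p)!) ^ 4
      = (p * (2 * (n / p) + 1)) ^ (2 * eps p n) * ((2 * (n / p))!) ^ 2
          * Pf p (2 * n) ^ 2 * (n !) ^ 4 := by
  have he : 2 * n / p = 2 * (n / p) + eps p n := two_mul_div p hp.pos n
  have h1 : eps p n ≤ 1 := eps_le_one p hp.pos n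
  rw [factorial_eq p hp (2 * n), factorial_eq p hp n, he]
  interval_cases h : eps p n
  · simp only [pow_zero, add_zero, one_mul]
    ring
  · rw [show (2 * (n / p) + 1)! = (2 * (n / p) + 1) * (2 * (n / p))! from Nat.factorial_succ _]
    ring

lemma key (p : ℕ) (hp : p.Prime) (n : ℕ) :
    (2 * n).choose n ^ 2 * Pf p n ^ 4
      = (p * (2 * (n / p) + 1)) ^ (2 * eps p n) * ((2 * (n / p)).choose (n / p)) ^ 2
          * Pf p (2 * n) ^ 2 := by
  have hch : ∀ m : ℕ, (2 * m).choose m * m ! * m ! = (2 * m)! := by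
    intro m
    have := Nat.choose_mul_factorial_mul_factorial (show m ≤ 2 * m by omega)
    rwa [show 2 * m - m = m from by omega] at this
  have hK : 0 < (n ! * (n / p)!) ^ 4 := by positivity
  apply Nat.eq_of_mul_eq_mul_right hK
  have e1 : ((2 * n)!) ^ 2 = (2 * n).choose n ^ 2 * (n !) ^ 4 := by rw [← hch n]; ring
  have e2 : ((2 * (n / p))!) ^ 2
      = (2 * (n / p)).choose (n / p) ^ 2 * ((n / p)!) ^ 4 := by rw [← hch (n / p)]; ring
  have h3 : (2 * n).choose n ^ 2 * Pf p n ^ 4 * (n ! * (n / p)!) ^ 4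
      = ((2 * n)!) ^ 2 * Pf p n ^ 4 * ((n / p)!) ^ 4 := by rw [e1]; ring
  have h4 : (p * (2 * (n / p) + 1)) ^ (2 * eps p n) * ((2 * (n / p)).choose (n / p)) ^ 2
        * Pf p (2 * n) ^ 2 * (n ! * (n / p)!) ^ 4
      = (p * (2 * (n / p) + 1)) ^ (2 * eps p n) * ((2 * (n / p))!) ^ 2
          * Pf p (2 * n) ^ 2 * (n !) ^ 4 := by rw [e2]; ring
  rw [h3, h4]
  exact ID p hp n

lemma norm_natCast_le_one (p : ℕ) [Fact p.Prime] (k : ℕ) : ‖(k : ℚ_[p])‖ ≤ 1 := by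
  have h := Padic.norm_int_le_one (p := p) (k : ℤ)
  simpa using h

lemma norm_Pf (p : ℕ) [Fact p.Prime] (q : ℕ) : ‖((Pf p q : ℕ) : ℚ_[p])‖ = 1 := by
  have h1 : ‖(Pf p q : ℚ_[p])‖ ≤ 1 := norm_natCast_le_one p _
  have h2 : ¬ ‖((Pf p q : ℤ) : ℚ_[p])‖ < 1 := by
    rw [Padic.norm_intCast_lt_one_iff]
    exact_mod_cast not_dvd_Pf p Fact.out q
  push_cast at h2
  linarith [lt_or_eq_of_le h1, h2]

lemma ratio_eq (p : ℕ) [Fact p.Prime] (q : ℕ) :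
    ((Nat.choose (2 * q) q ^ 2 : ℕ) : ℚ_[p]) / ((Nat.choose (2 * (q / p)) (q / p) ^ 2 : ℕ) : ℚ_[p])
      = (((p * (2 * (q / p) + 1)) : ℕ) : ℚ_[p]) ^ (2 * eps p q)
          * ((Pf p (2 * q) : ℕ) : ℚ_[p]) ^ 2 / ((Pf p q : ℕ) : ℚ_[p]) ^ 4 := by
  have hp' : p.Prime := Fact.out
  have h0 : ((Nat.choose (2 * (q / p)) (q / p) ^ 2 : ℕ) : ℚ_[p]) ≠ 0 := by
    exact_mod_cast (pow_pos (Nat.choose_pos (by omega)) 2).ne'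
  have h1 : ((Pf p q : ℕ) : ℚ_[p]) ^ 4 ≠ 0 :=
    pow_ne_zero _ (Nat.cast_ne_zero.2 (Pf_pos p q).ne')
  rw [div_eq_div_iff h0 h1]
  have hkQ : ((Nat.choose (2 * q) q ^ 2 * Pf p q ^ 4 : ℕ) : ℚ_[p])
      = (((p * (2 * (q / p) + 1)) ^ (2 * eps p q) * Nat.choose (2 * (q / p)) (q / p) ^ 2
          * Pf p (2 * q) ^ 2 : ℕ) : ℚ_[p]) := by
    exact_mod_cast congrArg (Nat.cast : ℕ → ℚ_[p]) (key p hp' q)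
  push_cast at hkQ ⊢
  linear_combination hkQ

lemma ratio_norm_le (p : ℕ) [Fact p.Prime] (q : ℕ) :
    ‖((Nat.choose (2 * q) q ^ 2 : ℕ) : ℚ_[p])
        / ((Nat.choose (2 * (q / p)) (q / p) ^ 2 : ℕ) : ℚ_[p])‖ ≤ 1 := by
  rw [ratio_eq p q, norm_div, norm_pow, norm_Pf p q, one_pow, div_one]
  have h : (((p * (2 * (q / p) + 1)) : ℕ) : ℚ_[p]) ^ (2 * eps p q)
      * ((Pf p (2 * q) : ℕ) : ℚ_[p]) ^ 2
      = (((p * (2 * (q / p) + 1)) ^ (2 * eps p q) * Pf p (2 * q) ^ 2 : ℕ) : ℚ_[p]) := by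
    push_cast; ring
  rw [h]
  exact norm_natCast_le_one p _

/-- Let `p` be an odd prime. The sequence `c n = C(2n,n)²` satisfies the Dwork
congruences for `p`: with `C n := c n / c ⌊n/p⌋ ∈ ℚ_p`, one has
`C n ≡ C (n + m pˢ) (mod pˢ)` for all `n s : ℕ` and all `m < p`, and `c 0 = 1`. -/
theorem dwork_congruences_central_binomial_sq (p : ℕ) [Fact p.Prime] (hp : Odd p)
    (c : ℕ → ℕ) (hc : ∀ n, c n = (Nat.choose (2 * n) n) ^ 2) :
    c 0 = 1 ∧
      ∀ n s m : ℕ, m < p →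
        ‖((c n : ℚ_[p]) / (c (n / p) : ℚ_[p]))
            - ((c (n + m * p ^ s) : ℚ_[p]) / (c ((n + m * p ^ s) / p) : ℚ_[p]))‖
          ≤ (p : ℝ) ^ (-(s : ℤ)) := by
  have hp' : p.Prime := Fact.out
  refine ⟨by simp [hc], ?_⟩
  intro n s m hm
  simp only [hc]
  rw [ratio_eq p n, ratio_eq p (n + m * p ^ s)]
  rcases Nat.eq_zero_or_pos s with hs | hs
  · subst hs
    have hb : ((p : ℝ)) ^ (-(0 : ℕ) : ℤ) = 1 := by norm_num
    rw [hb]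
    have h1 := ratio_norm_le p n
    have h2 := ratio_norm_le p (n + m * p ^ 0)
    rw [ratio_eq p n] at h1
    rw [ratio_eq p (n + m * p ^ 0)] at h2
    rw [sub_eq_add_neg]
    calc ‖_ + _‖ ≤ max ‖_‖ ‖_‖ := Padic.nonarchimedean _ _
      _ ≤ 1 := by rw [norm_neg]; exact max_le h1 h2
  · -- s ≥ 1
    haveI : NeZero (p ^ s) := ⟨pow_ne_zero s hp'.pos.ne'⟩
    have hps : p ^ s = p ^ (s - 1) * p := by
      rw [← pow_succ]; congr 1; omega
    have hN' : (n + m * p ^ s) / p = n / p + m * p ^ (s - 1) := by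
      rw [hps, ← mul_assoc, Nat.add_mul_div_right _ _ hp'.pos]
    have hmod : (n + m * p ^ s) % p = n % p := by
      rw [hps, ← mul_assoc, Nat.add_mul_mod_self_right]
    have heps : eps p (n + m * p ^ s) = eps p n := by unfold eps; rw [hmod]
    set w : ZMod (p ^ s) := ∏ x : ZMod (p ^ s), if p ∣ x.val then 1 else x with hw
    set a1 : ℕ := p * (2 * (n / p) + 1) with ha1
    set a2 : ℕ := p * (2 * ((n + m * p ^ s) / p) + 1) with ha2
    set A : ℕ := a1 ^ (2 * eps p n) * Pf p (2 * n) ^ 2 * Pf p (n + m * p ^ s) ^ 4 with hA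
    set B : ℕ := a2 ^ (2 * eps p (n + m * p ^ s)) * Pf p (2 * (n + m * p ^ s)) ^ 2
        * Pf p n ^ 4 with hB
    have hbase : (a2 : ZMod (p ^ s)) = (a1 : ZMod (p ^ s)) := by
      rw [ha2, hN']
      have hnat : p * (2 * (n / p + m * p ^ (s - 1)) + 1) = a1 + 2 * m * p ^ s := by
        rw [ha1, hps]; ring
      rw [hnat, Nat.cast_add,
        show ((2 * m * p ^ s : ℕ) : ZMod (p ^ s)) = 0 by
          rw [Nat.cast_mul, ZMod.natCast_self, mul_zero],
        add_zero]
    have hPf1 : ((Pf p (n + m * p ^ s) : ℕ) : ZMod (p ^ s)) = w ^ m * Pf p n :=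
      Pf_add_mul p s hp' hs m n
    have hPf2 : ((Pf p (2 * (n + m * p ^ s)) : ℕ) : ZMod (p ^ s))
        = w ^ (2 * m) * Pf p (2 * n) := by
      rw [show 2 * (n + m * p ^ s) = 2 * n + 2 * m * p ^ s from by ring]
      exact Pf_add_mul p s hp' hs (2 * m) (2 * n)
    have hAB : (A : ZMod (p ^ s)) = (B : ZMod (p ^ s)) := by
      rw [hA, hB, heps]
      simp only [Nat.cast_mul, Nat.cast_pow]
      rw [hPf1, hPf2, hbase]
      ring
    have hdvd : ((p : ℤ) ^ s) ∣ ((A : ℤ) - (B : ℤ)) := by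
      have hmodeq : A ≡ B [MOD p ^ s] := (ZMod.natCast_eq_natCast_iff A B (p ^ s)).1 hAB
      have h := hmodeq.dvd
      have h2 : ((p ^ s : ℕ) : ℤ) ∣ (A : ℤ) - (B : ℤ) := dvd_sub_comm.mp h
      exact_mod_cast h2
    have hnum : ‖((A : ℚ_[p]) - (B : ℚ_[p]))‖ ≤ (p : ℝ) ^ (-(s : ℤ)) := by
      have h := (Padic.norm_int_le_pow_iff_dvd ((A : ℤ) - (B : ℤ)) s).2 (by
        exact_mod_cast hdvd)
      push_cast at h
      exact h
    have hy1 : ((Pf p n : ℕ) : ℚ_[p]) ≠ 0 := Nat.cast_ne_zero.2 (Pf_pos p n).ne'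
    have hy2 : ((Pf p (n + m * p ^ s) : ℕ) : ℚ_[p]) ≠ 0 :=
      Nat.cast_ne_zero.2 (Pf_pos p _).ne'
    have hD : ((a1 : ℕ) : ℚ_[p]) ^ (2 * eps p n) * ((Pf p (2 * n) : ℕ) : ℚ_[p]) ^ 2
          / ((Pf p n : ℕ) : ℚ_[p]) ^ 4
        - ((a2 : ℕ) : ℚ_[p]) ^ (2 * eps p (n + m * p ^ s))
          * ((Pf p (2 * (n + m * p ^ s)) : ℕ) : ℚ_[p]) ^ 2
          / ((Pf p (n + m * p ^ s) : ℕ) : ℚ_[p]) ^ 4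
        = ((A : ℚ_[p]) - (B : ℚ_[p]))
          / (((Pf p n : ℕ) : ℚ_[p]) ^ 4 * ((Pf p (n + m * p ^ s) : ℕ) : ℚ_[p]) ^ 4) := by
      rw [hA, hB]
      field_simp
      push_cast
      ring
    rw [hD, norm_div, norm_mul, norm_pow, norm_pow, norm_Pf p n, norm_Pf p (n + m * p ^ s)]
    simpa using hnum
end

section
/- All four complex roots of the polynomial P(T) = 7⁶T⁴ − 7³·8·T³ + 7·2·T² − 8T + 1 have absolute value 7^{−3/2}. -/
/-!
The polynomial factors over `ℝ` as `(343T² + (-4 + 4√43)T + 1)(343T² + (-4 - 4√43)T + 1)`.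
Both factors have negative discriminant, so their complex roots come in conjugate pairs
whose product is `1/343`; hence every root has `‖z‖² = 7⁻³`.
-/

open Complex

theorem Complex.mul_normSq_eq_of_quadratic_eq_zero {a b c : ℝ} (hdisc : discrim a b c < 0)
    {z : ℂ} (hz : a * z ^ 2 + b * z + c = 0) : a * normSq z = c := by
  have hre : a * (z.re * z.re - z.im * z.im) + b * z.re + c = 0 := by
    simpa [sq] using congrArg re hz
  have him : z.im * (2 * a * z.re + b) = 0 := by
    have := congrArg im hz
    simp only [sq, add_im, mul_im, ofReal_re, ofReal_im, mul_re, zero_mul, add_zero,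
      zero_im] at this
    linear_combination this
  have him_ne : z.im ≠ 0 := by
    intro h0
    refine quadratic_ne_zero_of_discrim_ne_sq (fun s hs => ?_) z.re (by simpa [h0, sq] using hre)
    nlinarith [mul_self_nonneg s]
  have hvertex : 2 * a * z.re + b = 0 := (mul_eq_zero.mp him).resolve_left him_ne
  rw [normSq_apply]
  linear_combination z.re * hvertex - hre

theorem frobenius_poly_factor (z : ℂ) :
    7 ^ 6 * z ^ 4 - 7 ^ 3 * 8 * z ^ 3 + 7 * 2 * z ^ 2 - 8 * z + 1 =
      (343 * z ^ 2 + ((-4 + 4 * √43 : ℝ) : ℂ) * z + 1) *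
        (343 * z ^ 2 + ((-4 - 4 * √43 : ℝ) : ℂ) * z + 1) := by
  have h43 : ((√43 : ℝ) : ℂ) ^ 2 = 43 := by
    exact_mod_cast Real.sq_sqrt (by norm_num : (0 : ℝ) ≤ 43)
  push_cast
  linear_combination 16 * z ^ 2 * h43

theorem seven_rpow_neg_three_halves_sq : ((7 : ℝ) ^ (-(3 / 2 : ℝ))) ^ 2 = 1 / 343 := by
  rw [← Real.rpow_natCast, ← Real.rpow_mul (by norm_num)]
  norm_num

/-- All four complex roots of `P T = 7⁶T⁴ − 7³·8T³ + 7·2T² − 8T + 1` have absolute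
value `7^(−3/2)`. -/
theorem frobenius_roots_weil (z : ℂ)
    (hz : 7 ^ 6 * z ^ 4 - 7 ^ 3 * 8 * z ^ 3 + 7 * 2 * z ^ 2 - 8 * z + 1 = 0) :
    ‖z‖ = (7 : ℝ) ^ (-(3 / 2 : ℝ)) := by
  have hs : √43 ^ 2 = 43 := Real.sq_sqrt (by norm_num)
  have hs0 : 0 ≤ √43 := Real.sqrt_nonneg 43
  have hnormSq : 343 * normSq z = 1 := by
    rcases mul_eq_zero.mp (frobenius_poly_factor z ▸ hz) with h | h
    · exact mul_normSq_eq_of_quadratic_eq_zero (b := -4 + 4 * √43) (by rw [discrim]; nlinarith)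
        (by exact_mod_cast h)
    · exact mul_normSq_eq_of_quadratic_eq_zero (b := -4 - 4 * √43) (by rw [discrim]; nlinarith)
        (by exact_mod_cast h)
  rw [← pow_left_inj₀ (norm_nonneg z) (Real.rpow_nonneg (by norm_num) _) two_ne_zero,
    seven_rpow_neg_three_halves_sq, Complex.sq_norm]
  linarith
end

section
/- Let a0, a1, a2, a3 be smooth (or formal power series) functions on an interval/domain satisfying the CY(4) relation a1 = (1/2)a2a3 − (1/8)a3³ + a2′ − (3/4)a3a3′ − (1/2)a3″, let Y = exp((1/2)∫a3), and let f0 and y be two solutions of the equation u⁗ + a3u‴ + a2u″ + a1u′ + a0u = 0. Then the function E := Y[f0 y‴ − f0′ y″ + f0″ y′ − f0‴ y] + (Y a3 − Y′)[f0 y″ − f0″ y] + (Y a2 − (Y a3)′ + Y″)[f0 y′ − f0′ y] is constant, i.e. E′ = 0. -/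
open scoped ContDiff in
lemma hasDerivAt_iteratedDeriv_cy4 (f : ℝ → ℝ) (hf : ContDiff ℝ (⊤ : ℕ∞) f) (n : ℕ) (x : ℝ) :
    HasDerivAt (iteratedDeriv n f) (iteratedDeriv (n + 1) f x) x := by
  rw [iteratedDeriv_succ]
  have h : ContDiff ℝ ∞ (iteratedDeriv n f) := by
    rw [iteratedDeriv_eq_iterate]
    exact ContDiff.iterate_deriv n (hf.of_le (by simp))
  exact (h.differentiable (by simp) x).hasDerivAt

lemma hasDerivAt_deriv_cy4 (f : ℝ → ℝ) (hf : ContDiff ℝ (⊤ : ℕ∞) f) (x : ℝ) :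
    HasDerivAt (deriv f) (iteratedDeriv 2 f x) x := by
  have := hasDerivAt_iteratedDeriv_cy4 f hf 1 x
  rwa [iteratedDeriv_one] at this

/-- Given smooth coefficient functions satisfying the CY(4) relation, `Y` with
`Y' = (1/2) a₃ Y`, and two solutions `f0`, `y` of the fourth order equation, the Wronskian-type
expression `E` is constant: `E' = 0`. -/
theorem cy4_horizontal_section (a0 a1 a2 a3 Y f0 y : ℝ → ℝ)
    (ha0 : ContDiff ℝ (⊤ : ℕ∞) a0) (ha1 : ContDiff ℝ (⊤ : ℕ∞) a1) (ha2 : ContDiff ℝ (⊤ : ℕ∞) a2)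
    (ha3 : ContDiff ℝ (⊤ : ℕ∞) a3) (hYs : ContDiff ℝ (⊤ : ℕ∞) Y)
    (hf0s : ContDiff ℝ (⊤ : ℕ∞) f0) (hys : ContDiff ℝ (⊤ : ℕ∞) y)
    (hrel : ∀ x, a1 x = 1 / 2 * a2 x * a3 x - 1 / 8 * (a3 x) ^ 3 + deriv a2 x
      - 3 / 4 * a3 x * deriv a3 x - 1 / 2 * iteratedDeriv 2 a3 x)
    (hY : ∀ x, deriv Y x = 1 / 2 * a3 x * Y x)
    (hf0 : ∀ x, iteratedDeriv 4 f0 x + a3 x * iteratedDeriv 3 f0 x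
      + a2 x * iteratedDeriv 2 f0 x + a1 x * deriv f0 x + a0 x * f0 x = 0)
    (hy : ∀ x, iteratedDeriv 4 y x + a3 x * iteratedDeriv 3 y x
      + a2 x * iteratedDeriv 2 y x + a1 x * deriv y x + a0 x * y x = 0)
    (E : ℝ → ℝ)
    (hE : ∀ x, E x =
      Y x * (f0 x * iteratedDeriv 3 y x - deriv f0 x * iteratedDeriv 2 y x
        + iteratedDeriv 2 f0 x * deriv y x - iteratedDeriv 3 f0 x * y x)
      + (Y x * a3 x - deriv Y x) * (f0 x * iteratedDeriv 2 y x - iteratedDeriv 2 f0 x * y x)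
      + (Y x * a2 x - deriv (fun t => Y t * a3 t) x + iteratedDeriv 2 Y x)
          * (f0 x * deriv y x - deriv f0 x * y x)) :
    ∀ x, deriv E x = 0 := by
  intro x
  -- basic differentiability facts
  have hYa3 : ∀ t, deriv (fun s => Y s * a3 s) t = deriv Y t * a3 t + Y t * deriv a3 t :=
    fun t => ((hYs.differentiable (by simp) t).hasDerivAt.mul
      (ha3.differentiable (by simp) t).hasDerivAt).deriv
  have hY2 : ∀ t, iteratedDeriv 2 Y t
      = 1 / 2 * deriv a3 t * Y t + 1 / 4 * a3 t ^ 2 * Y t := by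
    intro t
    have hdY : deriv Y = fun s => 1 / 2 * a3 s * Y s := funext hY
    have h2 : HasDerivAt (fun s => 1 / 2 * a3 s * Y s)
        (1 / 2 * deriv a3 t * Y t + 1 / 2 * a3 t * deriv Y t) t := ((ha3.differentiable (by simp) t).hasDerivAt.const_mul (1 / 2 : ℝ)).mul
      (hYs.differentiable (by simp) t).hasDerivAt
    rw [iteratedDeriv_succ, iteratedDeriv_one, hdY, h2.deriv, hY t]
    ring
  -- rewrite E as an explicit smooth expression G
  have hEG : E = fun t =>
      Y t * (f0 t * iteratedDeriv 3 y t - deriv f0 t * iteratedDeriv 2 y t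
        + iteratedDeriv 2 f0 t * deriv y t - iteratedDeriv 3 f0 t * y t)
      + 1 / 2 * a3 t * Y t * (f0 t * iteratedDeriv 2 y t - iteratedDeriv 2 f0 t * y t)
      + (Y t * a2 t - 1 / 4 * a3 t ^ 2 * Y t - 1 / 2 * deriv a3 t * Y t)
          * (f0 t * deriv y t - deriv f0 t * y t) := by
    funext t
    rw [hE t, hYa3 t, hY2 t, hY t]
    ring
  -- derivatives of all the pieces
  have dY : HasDerivAt Y (deriv Y x) x := (hYs.differentiable (by simp) x).hasDerivAt
  have da2 : HasDerivAt a2 (deriv a2 x) x := (ha2.differentiable (by simp) x).hasDerivAt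
  have da3 : HasDerivAt a3 (deriv a3 x) x := (ha3.differentiable (by simp) x).hasDerivAt
  have da3' : HasDerivAt (deriv a3) (iteratedDeriv 2 a3 x) x := hasDerivAt_deriv_cy4 a3 ha3 x
  have df0 : HasDerivAt f0 (deriv f0 x) x := (hf0s.differentiable (by simp) x).hasDerivAt
  have df1 : HasDerivAt (deriv f0) (iteratedDeriv 2 f0 x) x := hasDerivAt_deriv_cy4 f0 hf0s x
  have df2 : HasDerivAt (iteratedDeriv 2 f0) (iteratedDeriv 3 f0 x) x :=
    hasDerivAt_iteratedDeriv_cy4 f0 hf0s 2 x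
  have df3 : HasDerivAt (iteratedDeriv 3 f0) (iteratedDeriv 4 f0 x) x :=
    hasDerivAt_iteratedDeriv_cy4 f0 hf0s 3 x
  have dy0 : HasDerivAt y (deriv y x) x := (hys.differentiable (by simp) x).hasDerivAt
  have dy1 : HasDerivAt (deriv y) (iteratedDeriv 2 y x) x := hasDerivAt_deriv_cy4 y hys x
  have dy2 : HasDerivAt (iteratedDeriv 2 y) (iteratedDeriv 3 y x) x :=
    hasDerivAt_iteratedDeriv_cy4 y hys 2 x
  have dy3 : HasDerivAt (iteratedDeriv 3 y) (iteratedDeriv 4 y x) x :=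
    hasDerivAt_iteratedDeriv_cy4 y hys 3 x
  have hA := dY.mul ((((df0.mul dy3).sub (df1.mul dy2)).add (df2.mul dy1)).sub (df3.mul dy0))
  have hB := ((da3.const_mul (1 / 2 : ℝ)).mul dY).mul ((df0.mul dy2).sub (df2.mul dy0))
  have hC := (((dY.mul da2).sub (((da3.pow 2).const_mul (1 / 4 : ℝ)).mul dY)).sub
      ((da3'.const_mul (1 / 2 : ℝ)).mul dY)).mul ((df0.mul dy1).sub (df1.mul dy0))
  have hG : HasDerivAt (fun t =>
      Y t * (f0 t * iteratedDeriv 3 y t - deriv f0 t * iteratedDeriv 2 y t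
        + iteratedDeriv 2 f0 t * deriv y t - iteratedDeriv 3 f0 t * y t)
      + 1 / 2 * a3 t * Y t * (f0 t * iteratedDeriv 2 y t - iteratedDeriv 2 f0 t * y t)
      + (Y t * a2 t - 1 / 4 * a3 t ^ 2 * Y t - 1 / 2 * deriv a3 t * Y t)
          * (f0 t * deriv y t - deriv f0 t * y t)) _ x := (hA.add hB).add hC
  rw [hEG, hG.deriv]
  simp only [Pi.mul_apply, Pi.sub_apply, Pi.add_apply, Pi.pow_apply]
  have e1 : iteratedDeriv 4 f0 x = -(a3 x * iteratedDeriv 3 f0 x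
      + a2 x * iteratedDeriv 2 f0 x + a1 x * deriv f0 x + a0 x * f0 x) := by
    linarith [hf0 x]
  have e2 : iteratedDeriv 4 y x = -(a3 x * iteratedDeriv 3 y x
      + a2 x * iteratedDeriv 2 y x + a1 x * deriv y x + a0 x * y x) := by
    linarith [hy x]
  rw [e1, e2, hrel x, hY x]
  ring
end
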